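/- arXiv:2007.04045 — 5 statements merged into one kernel-verified Lean document; each statement's English description precedes it below -/
import Mathlib

section
/- Let W_n(x) be the n×n matrix with (i,j) entry x^{j−i}/(j−i)! for j ≥ i and 0 otherwise (the Wronskian matrix of 1, x, x²/2,..., x^{n−1}/(n−1)!). Then for each i-element subset I of columns, the minor of W_n(x) on rows {1,...,i} and columns I is a positive rational multiple of x^{ℓ(I)}, where ℓ(I) = Σ_k (a_k − k). -/
/-!
With `B p q = a_q.descFactorial p / a_q!`, the entries of the minor are `C (B p q) * X ^ (a_q - p)`
(both sides vanish when `p > a_q`). Multiplying row `p` by `X ^ p` turns the minor into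
`B.map C` times the diagonal matrix of the `X ^ a_q`, so it equals `C (det B) * X ^ ℓ(I)`.
Up to the positive column factors `1 / a_q!`, `B` is the matrix of the falling factorial
polynomials evaluated at the `a_q`, whose determinant is the Vandermonde determinant
`∏_{p < q} (a_q - a_p) > 0`.
-/

open Polynomial

/-- The `n × n` unit Wronskian matrix `W_n(x)`, with `(i,j)` entry
`x^(j−i)/(j−i)!` for `j ≥ i` and `0` otherwise (the Wronskian matrix of
`1, x, x²/2, ..., x^(n−1)/(n−1)!`), as a matrix of polynomials over `ℚ`. -/
noncomputable def unitWronskian (n : ℕ) : Matrix (Fin n) (Fin n) (Polynomial ℚ) :=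
  fun p q => if p ≤ q then
    C (1 / ((q : ℕ) - (p : ℕ)).factorial : ℚ) * X ^ ((q : ℕ) - (p : ℕ)) else 0

open Matrix Finset

theorem Fin.val_le_val_of_strictMono {i n : ℕ} {a : Fin i → Fin n} (ha : StrictMono a)
    (k : Fin i) : (k : ℕ) ≤ a k := by
  obtain ⟨m, hm⟩ := k
  induction m with
  | zero => exact Nat.zero_le _
  | succ m ih =>
    have hlt : a ⟨m, by omega⟩ < a ⟨m + 1, hm⟩ := ha (Fin.mk_lt_mk.2 m.lt_succ_self)
    exact Nat.succ_le_of_lt ((ih _).trans_lt hlt)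

theorem Nat.one_div_factorial_sub {K : Type*} [Field K] [CharZero K] {m k : ℕ} (h : k ≤ m) :
    (1 / ((m - k).factorial : K)) = m.descFactorial k / m.factorial := by
  rw [eq_div_iff (Nat.cast_ne_zero.2 m.factorial_ne_zero), ← Nat.factorial_mul_descFactorial h,
    Nat.cast_mul, one_div, inv_mul_cancel_left₀ (Nat.cast_ne_zero.2 (m - k).factorial_ne_zero)]

namespace Matrix

theorem det_vandermonde_pos {R : Type*} [CommRing R] [LinearOrder R] [IsStrictOrderedRing R]
    {n : ℕ} {v : Fin n → R} (hv : StrictMono v) : 0 < det (vandermonde v) := by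
  rw [det_vandermonde]
  exact prod_pos fun p _ => prod_pos fun q hq => sub_pos.2 (hv (mem_Ioi.1 hq))

theorem det_descFactorial_eq_det_vandermonde {R : Type*} [CommRing R] [IsDomain R] {n : ℕ}
    (v : Fin n → ℕ) :
    det (of fun p q : Fin n => ((v q).descFactorial p : R)) =
      det (vandermonde fun q => (v q : R)) := by
  rw [det_eval_matrixOfPolynomials_eq_det_vandermonde _ (fun p => descPochhammer R p)
    (fun p => descPochhammer_natDegree R p) (fun p => monic_descPochhammer R p),
    ← det_transpose]
  congr 1
  ext p q
  simp [descPochhammer_eval_eq_descFactorial]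

theorem det_C_mul_X_pow_sub {R ι : Type*} [CommRing R] [Fintype ι] [DecidableEq ι]
    (B : Matrix ι ι R) (e d : ι → ℕ) (hed : ∀ q, e q ≤ d q)
    (hB : ∀ p q, B p q ≠ 0 → e p ≤ d q) :
    det (of fun p q => C (B p q) * X ^ (d q - e p)) = C (det B) * X ^ ∑ q, (d q - e q) := by
  have hscale :
      diagonal (fun p => (X : R[X]) ^ e p) * of (fun p q => C (B p q) * X ^ (d q - e p)) =
        B.map C * diagonal (fun q => X ^ d q) := by
    ext p q
    rw [diagonal_mul, mul_diagonal, of_apply, map_apply]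
    by_cases h : B p q = 0
    · simp [h]
    · rw [mul_left_comm, ← pow_add, Nat.add_sub_cancel' (hB p q h)]
  have hsum : ∑ q, d q = ∑ q, e q + ∑ q, (d q - e q) := by
    rw [← sum_add_distrib]
    exact sum_congr rfl fun q _ => (Nat.add_sub_cancel' (hed q)).symm
  rw [← (isRegular_X_pow (R := R) (∑ q, e q)).left.eq_iff]
  have hdet := congrArg det hscale
  rw [det_mul, det_mul, det_diagonal, det_diagonal, prod_pow_eq_pow_sum, prod_pow_eq_pow_sum,
    ← RingHom.mapMatrix_apply, ← RingHom.map_det] at hdet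
  rw [hdet, hsum, pow_add]
  ring

end Matrix

/-- every minor of `W_n(x)` on rows `{1,...,i}` and an `i`-element
column set `I = {a_1 < ... < a_i}` is a positive rational multiple of `x^(ℓ(I))`,
where `ℓ(I) = ∑_k (a_k − k)`. -/
theorem unitWronskian_minor (n i : ℕ) (hin : i ≤ n)
    (a : Fin i → Fin n) (ha : StrictMono a) :
    ∃ c : ℚ, 0 < c ∧
      Matrix.det (fun p q : Fin i => unitWronskian n (Fin.castLE hin p) (a q))
        = C c * X ^ (∑ k : Fin i, ((a k : ℕ) - (k : ℕ))) := by
  set B : Matrix (Fin i) (Fin i) ℚ :=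
    of fun p q => ((a q : ℕ).factorial : ℚ)⁻¹ * (a q : ℕ).descFactorial p
  have hB : ∀ p q, B p q ≠ 0 → (p : ℕ) ≤ a q := fun p q h => by
    by_contra! hlt
    simp [B, Nat.descFactorial_eq_zero_iff_lt.2 hlt] at h
  have hminor : (fun p q : Fin i => unitWronskian n (Fin.castLE hin p) (a q))
      = of fun p q => C (B p q) * X ^ ((a q : ℕ) - p) := by
    ext p q
    by_cases h : (p : ℕ) ≤ a q
    · simp [unitWronskian, B, Fin.le_def, h, Nat.one_div_factorial_sub h, div_eq_inv_mul]
    · simp [unitWronskian, B, Fin.le_def, h, Nat.descFactorial_eq_zero_iff_lt.2 (not_le.1 h)]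
  refine ⟨B.det, ?_, ?_⟩
  · have hdet : B.det = (∏ q, ((a q : ℕ).factorial : ℚ)⁻¹) *
        det (of fun p q => ((a q : ℕ).descFactorial p : ℚ)) := det_mul_row _ _
    rw [hdet, det_descFactorial_eq_det_vandermonde]
    exact mul_pos (prod_pos fun q _ => by positivity)
      (det_vandermonde_pos fun p q hpq => by exact_mod_cast ha hpq)
  · rw [hminor, det_C_mul_X_pow_sub B _ _ (Fin.val_le_val_of_strictMono ha) hB]
end

section
/- Let g ∈ Mat_n(k) with rows encoded as polynomials b_i(t) = Σ_{j=0}^{n-1} g_{i,j+1} t^j/j!. Then the i-th Wronskian y_i(g)(t) = W(b_1,...,b_i) equals Σ_{I ∈ C_n^i} m(I)·Δ_{[i],I}(g)·t^{ℓ(I)}/ℓ(I)!, where ℓ(I) = Σ_k (a_k − k) and m(I) is the number of saturated chains from {1,...,i} to I in the partial order on i-subsets where I ⟶ I' if I' is obtained from I by increasing one element by 1. -/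
open Finset Polynomial

/-- The length `ℓ(I) = ∑_k (a_k − k)` of an `i`-element subset of `{0,...,n−1}`
(0-based indexing), computed as `(∑ a ∈ I, a) − (0 + 1 + ... + (i−1))`. -/
def lenZ (i : ℕ) (I : Finset ℕ) : ℕ := (∑ a ∈ I, a) - i * (i - 1) / 2

/-- `numPaths n p I J` is the number of saturated chains of length `p` from `I` to `J`
in the partial order on subsets of `{0,...,n−1}` where one step replaces an element
`a` (with `a + 1` not in the set and `a + 1 < n`) by `a + 1`. -/
def numPaths (n : ℕ) : ℕ → Finset ℕ → Finset ℕ → ℕ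
  | 0, I, J => if I = J then 1 else 0
  | p + 1, I, J =>
      ∑ a ∈ I.filter (fun a => a + 1 ∉ I ∧ a + 1 < n),
        numPaths n p (insert (a + 1) (I.erase a)) J

/-!
Writing `e_j = t^j/j!`, the Wronskian matrix factors as `(g p j)_{p,j} · (e_j^{(q)})_{j,q}`, so by
Cauchy–Binet the Wronskian is `∑_I Δ_{[i],I}(g) · det (e_{a_p}^{(c_q)})`, with `a` the increasing
enumeration of `I` and `c = (0, …, i-1)`. Differentiating such a minor column by column raises one
`c_q` by one, which is a step of the chain poset out of `{c_q}`; the terms leaving the poset vanish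
(two equal columns, or a column of derivatives of order `≥ n` of polynomials of degree `< n`).
At `t = 0` the minor is `1` if `a = c` and `0` otherwise, so by induction on `ℓ = ∑ a - ∑ c` it is
the number of chains from `{c_q}` to `{a_p}` times `t^ℓ/ℓ!`.
-/

namespace Polynomial

theorem eq_of_derivative_eq_of_coeff_zero_eq {R : Type*} [CommRing R] [IsAddTorsionFree R]
    {f g : R[X]} (hd : derivative f = derivative g) (h0 : f.coeff 0 = g.coeff 0) : f = g := by
  have h := eq_C_of_derivative_eq_zero (p := f - g) (by rw [derivative_sub, hd, sub_self])
  rwa [coeff_sub, h0, sub_self, C_0, sub_eq_zero] at h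

theorem derivative_det {R n : Type*} [CommRing R] [Fintype n] [DecidableEq n]
    (M : Matrix n n R[X]) :
    derivative M.det = ∑ j, (M.updateCol j fun i => derivative (M i j)).det := by
  simp only [Matrix.det_apply, map_sum, derivative_smul, derivative_prod_finset, smul_sum]
  rw [sum_comm]
  refine sum_congr rfl fun j _ => sum_congr rfl fun σ _ => ?_
  rw [← prod_erase_mul _ _ (mem_univ j), Matrix.updateCol_self]
  congr 2
  exact prod_congr rfl fun i hi => by rw [Matrix.updateCol_ne (ne_of_mem_erase hi)]

end Polynomial

namespace Matrix

variable {R α n : Type*} [CommRing R] [Fintype n] [DecidableEq n]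

theorem det_of_sum_mul_eq_sum_injective [DecidableEq α] (s : Finset α) (A : n → α → R)
    (B : α → n → R) :
    (of fun p q => ∑ j ∈ s, A p j * B j q).det
      = ∑ r ∈ (Fintype.piFinset fun _ => s).filter Function.Injective,
          (∏ p, A p (r p)) * (of fun p q => B (r p) q).det := by
  have hrows : (of fun p q => ∑ j ∈ s, A p j * B j q) = fun p => ∑ j ∈ s, A p j • B j := by
    ext p q
    simp
  rw [hrows, sum_filter_of_ne fun r _ hr => ?_]
  · exact ((detRowAlternating (n := n) (R := R)).toMultilinearMap.map_sum_finset _ _).trans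
      (sum_congr rfl fun r _ => by rw [MultilinearMap.map_smul_univ]; rfl)
  · by_contra hinj
    obtain ⟨p, p', hrp, hne⟩ := Function.not_injective_iff.mp hinj
    exact hr (by rw [det_zero_of_row_eq hne (by ext q; simp [hrp]), mul_zero])

theorem det_mul_det_eq_sum_perm (A : n → α → R) (B : α → n → R) (e : n → α) :
    (of fun p q => A p (e q)).det * (of fun p q => B (e p) q).det
      = ∑ σ : Equiv.Perm n, (∏ p, A p (e (σ p))) * (of fun p q => B (e (σ p)) q).det := by
  rw [← det_transpose, det_apply, sum_mul]
  refine sum_congr rfl fun σ _ => ?_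
  rw [show (of fun p q => B (e (σ p)) q) = (of fun p q => B (e p) q).submatrix σ id from rfl,
    det_permute]
  simp only [Units.smul_def, zsmul_eq_mul, transpose_apply, of_apply]
  ring

end Matrix

def sortedTuple (m : ℕ) (I : Finset ℕ) (q : Fin m) : ℕ := (I.sort (· ≤ ·)).getD q 0

section SortedTuple

variable {m : ℕ} {I : Finset ℕ}

theorem sortedTuple_eq_orderEmbOfFin (h : I.card = m) : sortedTuple m I = I.orderEmbOfFin h := by
  funext q
  rw [sortedTuple, orderEmbOfFin_apply, List.getD_eq_getElem _ _ (by simp [h])]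
  rfl

theorem sortedTuple_strictMono (h : I.card = m) : StrictMono (sortedTuple m I) := by
  rw [sortedTuple_eq_orderEmbOfFin h]
  exact (I.orderEmbOfFin h).strictMono

theorem sortedTuple_mem (h : I.card = m) (q : Fin m) : sortedTuple m I q ∈ I := by
  rw [sortedTuple_eq_orderEmbOfFin h]
  exact orderEmbOfFin_mem I h q

theorem exists_sortedTuple_eq (h : I.card = m) {x : ℕ} (hx : x ∈ I) :
    ∃ q, sortedTuple m I q = x := by
  rw [← mem_coe, ← range_orderEmbOfFin I h] at hx
  rwa [sortedTuple_eq_orderEmbOfFin h]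

theorem image_sortedTuple_univ (h : I.card = m) : image (sortedTuple m I) univ = I := by
  rw [sortedTuple_eq_orderEmbOfFin h, image_orderEmbOfFin_univ]

theorem sum_sortedTuple {M : Type*} [AddCommMonoid M] (h : I.card = m) (f : ℕ → M) :
    ∑ q, f (sortedTuple m I q) = ∑ x ∈ I, f x := by
  conv_rhs => rw [← map_orderEmbOfFin_univ I h, sum_map]
  rw [sortedTuple_eq_orderEmbOfFin h]
  rfl

theorem sortedTuple_eq_of_strictMono (h : I.card = m) {f : Fin m → ℕ} (hf : ∀ q, f q ∈ I)
    (hmono : StrictMono f) : sortedTuple m I = f := by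
  rw [sortedTuple_eq_orderEmbOfFin h]
  exact (orderEmbOfFin_unique h hf hmono).symm

theorem sortedTuple_range : sortedTuple m (range m) = fun q : Fin m => (q : ℕ) :=
  sortedTuple_eq_of_strictMono (card_range m) (fun q => mem_range.mpr q.2) fun _ _ => id

theorem exists_sortedTuple_comp_perm_eq {r : Fin m → ℕ} (hr : Function.Injective r) :
    ∃ σ : Equiv.Perm (Fin m), sortedTuple m (image r univ) ∘ σ = r := by
  have hc : (image r univ).card = m := by rw [card_image_of_injective _ hr, card_fin]
  refine ⟨(Tuple.sort r)⁻¹, ?_⟩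
  rw [sortedTuple_eq_of_strictMono hc (fun q => mem_image_of_mem r (mem_univ _))
    ((Tuple.monotone_sort r).strictMono_of_injective (hr.comp (Tuple.sort r).injective))]
  ext q
  simp

theorem le_sortedTuple (h : I.card = m) (q : Fin m) : (q : ℕ) ≤ sortedTuple m I q := by
  obtain ⟨q, hq⟩ := q
  induction q with
  | zero => exact Nat.zero_le _
  | succ q ih =>
    exact (ih (by omega)).trans_lt (sortedTuple_strictMono h (Fin.mk_lt_mk.mpr q.lt_succ_self))

theorem sum_range_le_sum_of_card_eq (h : I.card = m) : ∑ a ∈ range m, a ≤ ∑ a ∈ I, a := by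
  rw [← Fin.sum_univ_eq_sum_range, ← sum_sortedTuple h (fun x => x)]
  exact sum_le_sum fun q _ => le_sortedTuple h q

theorem card_insert_succ_erase {x : ℕ} (hx : x ∈ I) (hx1 : x + 1 ∉ I) :
    (insert (x + 1) (I.erase x)).card = I.card := by
  rw [card_insert_of_notMem fun h => hx1 (mem_of_mem_erase h), card_erase_add_one hx]

theorem sum_insert_succ_erase {x : ℕ} (hx : x ∈ I) (hx1 : x + 1 ∉ I) :
    ∑ y ∈ insert (x + 1) (I.erase x), y = ∑ y ∈ I, y + 1 := by
  rw [sum_insert fun h => hx1 (mem_of_mem_erase h), ← sum_erase_add I _ hx]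
  ring

theorem update_sortedTuple (h : I.card = m) {q : Fin m} (hq : sortedTuple m I q + 1 ∉ I) :
    Function.update (sortedTuple m I) q (sortedTuple m I q + 1)
      = sortedTuple m (insert (sortedTuple m I q + 1) (I.erase (sortedTuple m I q))) := by
  have hc := sortedTuple_strictMono h
  have hcard := (card_insert_succ_erase (sortedTuple_mem h q) hq).trans h
  refine (sortedTuple_eq_of_strictMono hcard (fun p => ?_) fun p p' hpp' => ?_).symm
  · rcases eq_or_ne p q with rfl | hpq
    · simp
    · rw [Function.update_of_ne hpq]
      exact mem_insert_of_mem (mem_erase.mpr ⟨hc.injective.ne hpq, sortedTuple_mem h p⟩)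
  · have hne : sortedTuple m I p' ≠ sortedTuple m I q + 1 :=
      fun he => hq (he ▸ sortedTuple_mem h p')
    have hlt := hc hpp'
    rcases eq_or_ne p q with rfl | hpq
    · rw [Function.update_self, Function.update_of_ne hpp'.ne']
      omega
    · rw [Function.update_of_ne hpq]
      rcases eq_or_ne p' q with rfl | hp'q
      · rw [Function.update_self]
        omega
      · rwa [Function.update_of_ne hp'q]

theorem Matrix.det_of_sum_mul_eq_sum_powersetCard {R : Type*} [CommRing R] (s : Finset ℕ)
    (A : Fin m → ℕ → R) (B : ℕ → Fin m → R) :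
    (of fun p q => ∑ j ∈ s, A p j * B j q).det
      = ∑ I ∈ s.powersetCard m, (of fun p q => A p (sortedTuple m I q)).det
          * (of fun p q => B (sortedTuple m I p) q).det := by
  rw [det_of_sum_mul_eq_sum_injective,
    sum_congr rfl fun I _ => det_mul_det_eq_sum_perm A B (sortedTuple m I), sum_sigma']
  symm
  refine sum_bij (fun x _ => sortedTuple m x.1 ∘ x.2) ?_ ?_ ?_ fun _ _ => rfl
  · rintro ⟨I, σ⟩ hx
    obtain ⟨hIs, hI⟩ := mem_powersetCard.mp (mem_sigma.mp hx).1
    exact mem_filter.mpr ⟨Fintype.mem_piFinset.mpr fun p => hIs (sortedTuple_mem hI _),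
      (sortedTuple_strictMono hI).injective.comp σ.injective⟩
  · rintro ⟨I, σ⟩ hx ⟨J, τ⟩ hy heq
    simp only [mem_sigma, mem_powersetCard, mem_univ, and_true] at hx hy heq
    have himage {K : Finset ℕ} (hK : K.card = m) (π : Equiv.Perm (Fin m)) :
        image (sortedTuple m K ∘ π) univ = K := by
      rw [← image_image, image_univ_equiv, image_sortedTuple_univ hK]
    obtain rfl : I = J := by rw [← himage hx.2 σ, heq, himage hy.2 τ]
    obtain rfl : σ = τ :=
      Equiv.ext fun p => (sortedTuple_strictMono hx.2).injective (congrFun heq p)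
    rfl
  · intro r hr
    obtain ⟨hrs, hinj⟩ := mem_filter.mp hr
    obtain ⟨σ, hσ⟩ := exists_sortedTuple_comp_perm_eq hinj
    refine ⟨⟨image r univ, σ⟩, mem_sigma.mpr ⟨mem_powersetCard.mpr ⟨?_, ?_⟩, mem_univ _⟩, hσ⟩
    · exact image_subset_iff.mpr fun p _ => Fintype.mem_piFinset.mp hrs p
    · rw [card_image_of_injective _ hinj, card_fin]

end SortedTuple

theorem sum_update_add_one {ι : Type*} [Fintype ι] [DecidableEq ι] (c : ι → ℕ) (q : ι) :
    ∑ p, Function.update c q (c q + 1) p = ∑ p, c p + 1 := by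
  rw [sum_update_of_mem (mem_univ q), ← add_sum_erase univ c (mem_univ q),
    sdiff_singleton_eq_erase]
  ring

section ExpMonomial

variable (k : Type*) [CommRing k] [Algebra ℚ k]

noncomputable def expMonomial (L : ℕ) : k[X] := C (algebraMap ℚ k (1 / L.factorial)) * X ^ L

variable {k}

theorem expMonomial_zero : expMonomial k 0 = 1 := by
  simp [expMonomial]

theorem derivative_expMonomial_succ (L : ℕ) :
    derivative (expMonomial k (L + 1)) = expMonomial k L := by
  rw [expMonomial, expMonomial, derivative_C_mul_X_pow, Nat.add_sub_cancel,
    ← map_natCast (algebraMap ℚ k), ← map_mul]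
  congr 3
  rw [Nat.factorial_succ]
  push_cast
  field_simp

theorem iterate_derivative_expMonomial_add (a c : ℕ) :
    derivative^[c] (expMonomial k (a + c)) = expMonomial k a := by
  induction c with
  | zero => rfl
  | succ c ih => rw [Function.iterate_succ_apply, ← add_assoc, derivative_expMonomial_succ, ih]

theorem iterate_derivative_expMonomial_of_lt {a c : ℕ} (h : a < c) :
    derivative^[c] (expMonomial k a) = 0 :=
  iterate_derivative_eq_zero ((natDegree_C_mul_X_pow_le _ _).trans_lt h)

theorem coeff_zero_expMonomial (L : ℕ) :
    (expMonomial k L).coeff 0 = if L = 0 then 1 else 0 := by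
  rcases Nat.eq_zero_or_pos L with rfl | hL
  · simp [expMonomial_zero]
  · rw [expMonomial, coeff_C_mul, coeff_X_pow, if_neg hL.ne, if_neg hL.ne', mul_zero]

theorem coeff_zero_iterate_derivative_expMonomial (a c : ℕ) :
    (derivative^[c] (expMonomial k a)).coeff 0 = if a = c then 1 else 0 := by
  rcases lt_or_ge a c with h | h
  · rw [iterate_derivative_expMonomial_of_lt h, coeff_zero, if_neg h.ne]
  · obtain ⟨d, rfl⟩ := Nat.exists_eq_add_of_le' h
    rw [iterate_derivative_expMonomial_add, coeff_zero_expMonomial]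
    simp

theorem C_algebraMap_div_factorial_mul_X_pow (N L : ℕ) :
    C (algebraMap ℚ k (N / L.factorial)) * X ^ L = N • expMonomial k L := by
  rw [expMonomial, nsmul_eq_mul, ← C_eq_natCast, ← mul_assoc, ← C_mul,
    ← map_natCast (algebraMap ℚ k), ← map_mul, mul_one_div]

end ExpMonomial

section ExpMinor

variable {k : Type*} [CommRing k] [Algebra ℚ k] {m : ℕ} {c a : Fin m → ℕ}

variable (k) in
noncomputable def expMinor (c a : Fin m → ℕ) : k[X] :=
  (Matrix.of fun p q => derivative^[c q] (expMonomial k (a p))).det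

theorem derivative_expMinor (c a : Fin m → ℕ) :
    derivative (expMinor k c a) = ∑ q, expMinor k (Function.update c q (c q + 1)) a := by
  rw [expMinor, derivative_det]
  refine sum_congr rfl fun q _ => congrArg Matrix.det ?_
  ext p q'
  rcases eq_or_ne q' q with rfl | hne
  · simp [Function.iterate_succ_apply']
  · simp [hne]

theorem expMinor_eq_zero_of_forall_lt {q : Fin m} (h : ∀ p, a p < c q) : expMinor k c a = 0 :=
  Matrix.det_eq_zero_of_column_eq_zero q fun p => iterate_derivative_expMonomial_of_lt (h p)

theorem expMinor_eq_zero_of_not_injective (h : ¬ Function.Injective c) : expMinor k c a = 0 := by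
  obtain ⟨q, q', hcq, hne⟩ := Function.not_injective_iff.mp h
  exact Matrix.det_zero_of_column_eq hne fun p => by simp [hcq]

theorem expMinor_eq_zero_of_sum_lt (h : ∑ p, a p < ∑ q, c q) : expMinor k c a = 0 := by
  rw [expMinor, Matrix.det_apply]
  refine sum_eq_zero fun σ _ => ?_
  obtain ⟨q, -, hq⟩ := exists_lt_of_sum_lt (f := fun q => a (σ q)) (g := c)
    (by rwa [Equiv.sum_comp σ a])
  rw [prod_eq_zero (mem_univ q) (iterate_derivative_expMonomial_of_lt hq), smul_zero]

theorem expMinor_self (hc : StrictMono c) : expMinor k c c = 1 := by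
  rw [expMinor, Matrix.det_of_isLowerTriangular]
  · refine prod_eq_one fun p _ => ?_
    simpa [expMonomial_zero] using iterate_derivative_expMonomial_add (k := k) 0 (c p)
  · intro p q hpq
    exact iterate_derivative_expMonomial_of_lt (hc hpq)

theorem coeff_zero_expMinor_eq_zero {p : Fin m} (hp : ∀ q, a p ≠ c q) :
    (expMinor k c a).coeff 0 = 0 := by
  rw [expMinor, ← constantCoeff_apply, RingHom.map_det]
  refine Matrix.det_eq_zero_of_row_eq_zero p fun q => ?_
  simp [coeff_zero_iterate_derivative_expMonomial, hp q]

variable {C A : Finset ℕ}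

theorem coeff_zero_expMinor_sortedTuple_of_ne (hC : C.card = m) (hA : A.card = m) (hCA : C ≠ A) :
    (expMinor k (sortedTuple m C) (sortedTuple m A)).coeff 0 = 0 := by
  obtain ⟨x, hxA, hxC⟩ : ∃ x ∈ A, x ∉ C := by
    by_contra! hAC
    exact hCA (eq_of_subset_of_card_le hAC (by omega)).symm
  obtain ⟨p, rfl⟩ := exists_sortedTuple_eq hA hxA
  exact coeff_zero_expMinor_eq_zero fun q hpq => hxC (hpq ▸ sortedTuple_mem hC q)

theorem expMinor_update_sortedTuple_eq_zero {n : ℕ} (hC : C.card = m) (hA : A.card = m)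
    (hAn : A ⊆ range n) {q : Fin m}
    (hq : ¬(sortedTuple m C q + 1 ∉ C ∧ sortedTuple m C q + 1 < n)) :
    expMinor k (Function.update (sortedTuple m C) q (sortedTuple m C q + 1)) (sortedTuple m A)
      = 0 := by
  rcases not_and_or.mp hq with hq | hq
  · obtain ⟨q', hq'⟩ := exists_sortedTuple_eq hC (not_not.mp hq)
    have hq'q : q' ≠ q := by
      rintro rfl
      omega
    refine expMinor_eq_zero_of_not_injective (Function.not_injective_iff.mpr ⟨q', q, ?_, hq'q⟩)
    rw [Function.update_of_ne hq'q, Function.update_self, hq']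
  · refine expMinor_eq_zero_of_forall_lt (q := q) fun p => ?_
    have := mem_range.mp (hAn (sortedTuple_mem hA p))
    rw [Function.update_self]
    omega

theorem expMinor_sortedTuple_eq_numPaths {n : ℕ} (hA : A.card = m) (hAn : A ⊆ range n) (L : ℕ)
    (hC : C.card = m) (hL : ∑ x ∈ C, x + L = ∑ x ∈ A, x) :
    expMinor k (sortedTuple m C) (sortedTuple m A) = numPaths n L C A • expMonomial k L := by
  have : IsAddTorsionFree k := .of_module_rat k
  induction L generalizing C with
  | zero =>
    by_cases hCA : C = A
    · subst hCA
      simp [expMinor_self (sortedTuple_strictMono hC), numPaths, expMonomial_zero]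
    refine eq_of_derivative_eq_of_coeff_zero_eq ?_ ?_
    · rw [derivative_expMinor, numPaths, if_neg hCA, zero_smul, derivative_zero]
      refine sum_eq_zero fun q _ => expMinor_eq_zero_of_sum_lt ?_
      rw [sum_update_add_one, sum_sortedTuple hC (fun x => x), sum_sortedTuple hA (fun x => x)]
      omega
    · rw [coeff_zero_expMinor_sortedTuple_of_ne hC hA hCA, numPaths, if_neg hCA, zero_smul,
        coeff_zero]
  | succ L ih =>
    have hCA : C ≠ A := by
      rintro rfl
      omega
    refine eq_of_derivative_eq_of_coeff_zero_eq ?_ ?_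
    · rw [derivative_expMinor, map_nsmul, derivative_expMonomial_succ, numPaths, sum_smul,
        sum_filter, ← sum_sortedTuple hC]
      refine sum_congr rfl fun q _ => ?_
      split_ifs with hq
      · have hcC := sortedTuple_mem hC q
        rw [update_sortedTuple hC hq.1]
        refine ih ((card_insert_succ_erase hcC hq.1).trans hC) ?_
        rw [sum_insert_succ_erase hcC hq.1]
        omega
      · exact expMinor_update_sortedTuple_eq_zero hC hA hAn hq
    · rw [coeff_zero_expMinor_sortedTuple_of_ne hC hA hCA, coeff_smul, coeff_zero_expMonomial,
        if_neg L.succ_ne_zero, smul_zero]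

end ExpMinor

theorem wronskian_eq_contraction_of_pluecker_general
    (k : Type*) [CommRing k] [Algebra ℚ k]
    (n i : ℕ)
    (g : ℕ → ℕ → k) (b : ℕ → Polynomial k)
    (hb : ∀ p, b p = ∑ j ∈ range n,
        C (g p j * algebraMap ℚ k (1 / j.factorial)) * X ^ j) :
    Matrix.det (fun p q : Fin i => (Polynomial.derivative (R := k))^[(q : ℕ)] (b p))
      = ∑ I ∈ (range n).powersetCard i,
          C (Matrix.det (fun p q : Fin i => g p ((I.sort (· ≤ ·)).getD q 0))
              * algebraMap ℚ k ((numPaths n (lenZ i I) (range i) I : ℚ)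
                  / (lenZ i I).factorial))
            * X ^ lenZ i I := by
  have hentries : (fun p q : Fin i => derivative^[q] (b p)) = Matrix.of fun (p q : Fin i) =>
      ∑ j ∈ range n, C (g p j) * derivative^[q] (expMonomial k j) := by
    ext p q
    simp only [hb, iterate_derivative_sum, C_mul, mul_assoc, iterate_derivative_C_mul,
      expMonomial, Matrix.of_apply]
  rw [hentries, Matrix.det_of_sum_mul_eq_sum_powersetCard]
  refine sum_congr rfl fun I hI => ?_
  obtain ⟨hIn, hIcard⟩ := mem_powersetCard.mp hI
  have hℓ : ∑ x ∈ range i, x + lenZ i I = ∑ x ∈ I, x := by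
    rw [lenZ, ← sum_range_id]
    exact Nat.add_sub_cancel' (sum_range_le_sum_of_card_eq hIcard)
  have hminor := expMinor_sortedTuple_eq_numPaths (k := k) hIcard hIn _ (card_range i) hℓ
  rw [sortedTuple_range] at hminor
  rw [C_mul, mul_assoc, C_algebraMap_div_factorial_mul_X_pow, ← hminor]
  congr 1
  exact (RingHom.map_det C (Matrix.of fun (p q : Fin i) => g p (sortedTuple i I q))).symm

/-- for `g ∈ Mat_n(k)` (`k` a commutative `ℚ`-algebra), rows encoded
as `b p (t) = ∑_j g_{p,j} t^j/j!` (0-based), the `i`-th Wronskian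
`y_i(g) = W(b_1,...,b_i)` equals
`∑_{I ∈ C_n^i} m(I) · Δ_{[i],I}(g) · t^(ℓ(I))/ℓ(I)!`, where `m(I)` is the number of
saturated chains from the minimal `i`-subset to `I`. -/
theorem wronskian_eq_contraction_of_pluecker
    (k : Type*) [CommRing k] [Algebra ℚ k]
    (n i : ℕ) (hi : 1 ≤ i) (hin : i ≤ n)
    (g : ℕ → ℕ → k) (b : ℕ → Polynomial k)
    (hb : ∀ p, b p = ∑ j ∈ range n,
        C (g p j * algebraMap ℚ k (1 / j.factorial)) * X ^ j) :
    Matrix.det (fun p q : Fin i => (Polynomial.derivative (R := k))^[(q : ℕ)] (b p))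
      = ∑ I ∈ (range n).powersetCard i,
          C (Matrix.det (fun p q : Fin i => g p ((I.sort (· ≤ ·)).getD q 0))
              * algebraMap ℚ k ((numPaths n (lenZ i I) (range i) I : ℚ)
                  / (lenZ i I).factorial))
            * X ^ lenZ i I :=
  wronskian_eq_contraction_of_pluecker_general k n i g b hb
end

section
/- For a 4×4 matrix g, with b_i(t) = Σ_{j=0}^3 g_{i,j+1}t^j/j! and Δ_{ijk} the 3×3 minor on rows 1,2,3 and columns i,j,k, the third Wronskian W(b_1,b_2,b_3) equals Δ_{123} + Δ_{124}t + Δ_{134}t²/2 + Δ_{234}t³/6. -/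
open Polynomial

/-!
Write `e = (1, X, X²/2, X³/6)`; then `b i = ∑ⱼ g i j * e j`, and differentiating shifts `e` down by
one slot. So the Wronskian matrix factors as `G * E`, where `G` is the top `3 × 4` block of `g` and
`E` has columns `e, e', e''`. Cauchy–Binet expands `det (G * E)` over the four 3-element column sets;
the matching minors of `G` are the `Δ`, and those of `E` are `1, X, X²/2, X³/6`.
-/

theorem Matrix.det_mul_fin_three_four {R : Type*} [CommRing R]
    (A : Matrix (Fin 3) (Fin 4) R) (B : Matrix (Fin 4) (Fin 3) R) :
    (A * B).det =
      (A.submatrix id ![0, 1, 2]).det * (B.submatrix ![0, 1, 2] id).det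
      + (A.submatrix id ![0, 1, 3]).det * (B.submatrix ![0, 1, 3] id).det
      + (A.submatrix id ![0, 2, 3]).det * (B.submatrix ![0, 2, 3] id).det
      + (A.submatrix id ![1, 2, 3]).det * (B.submatrix ![1, 2, 3] id).det := by
  simp only [Matrix.det_fin_three, Matrix.mul_apply, Fin.sum_univ_four, Matrix.submatrix_apply,
    id_eq, Matrix.cons_val_zero, Matrix.cons_val_one, Matrix.cons_val]
  ring

section

variable (k : Type*) [CommRing k] [Algebra ℚ k]

noncomputable def truncExpWronskian : Matrix (Fin 4) (Fin 3) k[X] :=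
  !![1, 0, 0;
     X, 1, 0;
     C (algebraMap ℚ k (1 / 2)) * X ^ 2, X, 1;
     C (algebraMap ℚ k (1 / 6)) * X ^ 3, C (algebraMap ℚ k (1 / 2)) * X ^ 2, X]

variable {k}

lemma C_half_mul_two : (C (algebraMap ℚ k (1 / 2)) : k[X]) * 2 = 1 := by
  have : algebraMap ℚ k (1 / 2) * 2 = 1 := by
    rw [← map_ofNat (algebraMap ℚ k) 2, ← map_mul]; norm_num
  rw [← C_1, ← this, C_mul, map_ofNat]

lemma C_sixth_mul_three :
    (C (algebraMap ℚ k (1 / 6)) : k[X]) * 3 = C (algebraMap ℚ k (1 / 2)) := by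
  have : algebraMap ℚ k (1 / 6) * 3 = algebraMap ℚ k (1 / 2) := by
    rw [← map_ofNat (algebraMap ℚ k) 3, ← map_mul]; norm_num
  rw [← this, C_mul, map_ofNat]

lemma det_truncExpWronskian_012 :
    ((truncExpWronskian k).submatrix ![0, 1, 2] id).det = 1 := by
  rw [Matrix.det_fin_three]
  simp only [truncExpWronskian, Matrix.submatrix_apply, id_eq, Matrix.of_apply, Matrix.cons_val',
    Matrix.cons_val, Matrix.cons_val_zero, Matrix.cons_val_one, Matrix.cons_val_fin_one]
  ring

lemma det_truncExpWronskian_013 :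
    ((truncExpWronskian k).submatrix ![0, 1, 3] id).det = X := by
  rw [Matrix.det_fin_three]
  simp only [truncExpWronskian, Matrix.submatrix_apply, id_eq, Matrix.of_apply, Matrix.cons_val',
    Matrix.cons_val, Matrix.cons_val_zero, Matrix.cons_val_one, Matrix.cons_val_fin_one]
  ring

lemma det_truncExpWronskian_023 :
    ((truncExpWronskian k).submatrix ![0, 2, 3] id).det = C (algebraMap ℚ k (1 / 2)) * X ^ 2 := by
  rw [Matrix.det_fin_three]
  simp only [truncExpWronskian, Matrix.submatrix_apply, id_eq, Matrix.of_apply, Matrix.cons_val',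
    Matrix.cons_val, Matrix.cons_val_zero, Matrix.cons_val_one, Matrix.cons_val_fin_one]
  linear_combination -X ^ 2 * C_half_mul_two (k := k)

lemma det_truncExpWronskian_123 :
    ((truncExpWronskian k).submatrix ![1, 2, 3] id).det = C (algebraMap ℚ k (1 / 6)) * X ^ 3 := by
  rw [Matrix.det_fin_three]
  simp only [truncExpWronskian, Matrix.submatrix_apply, id_eq, Matrix.of_apply, Matrix.cons_val',
    Matrix.cons_val, Matrix.cons_val_zero, Matrix.cons_val_one, Matrix.cons_val_fin_one]
  linear_combination -X ^ 3 * C_half_mul_two (k := k)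

lemma iterate_derivative_eq_sum_mul_truncExpWronskian (a : Fin 4 → k) (q : Fin 3) :
    derivative^[q] (C (a 0) + C (a 1) * X + C (a 2 * algebraMap ℚ k (1 / 2)) * X ^ 2
        + C (a 3 * algebraMap ℚ k (1 / 6)) * X ^ 3)
      = ∑ j, C (a j) * truncExpWronskian k j q := by
  fin_cases q <;>
    simp only [truncExpWronskian, Matrix.of_apply, Matrix.cons_val', Matrix.cons_val,
      Matrix.cons_val_zero, Matrix.cons_val_one, Matrix.cons_val_fin_one, Fin.sum_univ_four,
      Fin.zero_eta, Fin.mk_one, Fin.reduceFinMk, Function.iterate_zero, Function.iterate_succ,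
      Function.comp_apply, id_eq, C_mul, derivative_add, derivative_mul, derivative_C,
      derivative_X, derivative_X_pow, derivative_one, derivative_ofNat, map_zero, Nat.reduceSub,
      Nat.cast_ofNat, map_ofNat, pow_one]
  · ring
  · linear_combination (C (a 2) * X) * C_half_mul_two (k := k)
      + (C (a 3) * X ^ 2) * C_sixth_mul_three (k := k)
  · linear_combination (C (a 2) + C (a 3) * X) * C_half_mul_two (k := k)
      + (2 * C (a 3) * X) * C_sixth_mul_three (k := k)

end

/-- for a `4 × 4` matrix `g` over a commutative `ℚ`-algebra, with
`b i (t) = ∑_{j=0}^3 g_{i,j+1} t^j/j!` and `Δ_{ijk}` the `3 × 3` minor on rows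
`1,2,3` and columns `i,j,k`, the third Wronskian satisfies
`W(b_1,b_2,b_3) = Δ₁₂₃ + Δ₁₂₄ t + Δ₁₃₄ t²/2 + Δ₂₃₄ t³/6`. -/
theorem wronskian_three_rows_gl4
    (k : Type*) [CommRing k] [Algebra ℚ k]
    (g : Matrix (Fin 4) (Fin 4) k)
    (b : Fin 4 → Polynomial k)
    (hb : ∀ i, b i = C (g i 0) + C (g i 1) * X
        + C (g i 2 * algebraMap ℚ k (1 / 2)) * X ^ 2
        + C (g i 3 * algebraMap ℚ k (1 / 6)) * X ^ 3)
    (Δ : Fin 4 → Fin 4 → Fin 4 → k)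
    (hΔ : ∀ c₁ c₂ c₃, Δ c₁ c₂ c₃ =
        Matrix.det (fun p q : Fin 3 => g (Fin.castSucc p) (![c₁, c₂, c₃] q))) :
    Matrix.det (fun p q : Fin 3 =>
        (Polynomial.derivative (R := k))^[(q : ℕ)] (b (Fin.castSucc p)))
      = C (Δ 0 1 2) + C (Δ 0 1 3) * X
        + C (Δ 0 2 3 * algebraMap ℚ k (1 / 2)) * X ^ 2
        + C (Δ 1 2 3 * algebraMap ℚ k (1 / 6)) * X ^ 3 := by
  let G : Matrix (Fin 3) (Fin 4) k[X] := Matrix.of fun p j => C (g p.castSucc j)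
  have hW : G * truncExpWronskian k
      = fun p q : Fin 3 => derivative^[(q : ℕ)] (b (Fin.castSucc p)) := by
    ext p q
    rw [hb, iterate_derivative_eq_sum_mul_truncExpWronskian, Matrix.mul_apply]
    rfl
  have hG : ∀ c₁ c₂ c₃, (G.submatrix id ![c₁, c₂, c₃]).det = C (Δ c₁ c₂ c₃) := by
    intro c₁ c₂ c₃
    rw [hΔ]
    exact (RingHom.map_det C (g.submatrix Fin.castSucc ![c₁, c₂, c₃])).symm
  rw [← hW, Matrix.det_mul_fin_three_four, hG, hG, hG, hG, det_truncExpWronskian_012,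
    det_truncExpWronskian_013, det_truncExpWronskian_023, det_truncExpWronskian_123, C_mul, C_mul]
  ring
end

section
/- Desnanot–Jacobi identity: for an n×n matrix A over a commutative ring with n ≥ 2, det(A)·det(A_{1n,1n}) = det(A_{1,1})·det(A_{n,n}) − det(A_{1,n})·det(A_{n,1}), where A_{i,j} denotes A with row i and column j removed, and A_{1n,1n} denotes A with rows 1, n and columns 1, n removed. -/
/-!
Replacing the columns of the identity indexed by `l` with those of `adj A` gives a matrix `B`
with `A * B` block upper-triangular with diagonal blocks `det A • 1` and `A₂₂`; as `B` is block
lower-triangular, `det A · det (adj A)₁₁ = det A ^ |l| · det A₂₂`. For the generic matrix over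
`ℤ[X_ij]` the factor `det A` is a nonzero element of a domain and cancels, and specialising
gives Jacobi's complementary-minor identity `det (adj A)₁₁ = det A ^ (|l| - 1) · det A₂₂` over
every commutative ring. Desnanot–Jacobi is the case where `l` indexes the first and last rows,
once the entries of `adj A` are written as signed minors.
-/

open Matrix

noncomputable def Fin.endsSumInteriorEquiv (n : ℕ) : Fin 2 ⊕ Fin n ≃ Fin (n + 2) :=
  Equiv.ofBijective (Sum.elim ![0, Fin.last (n + 1)] fun k => k.succ.castSucc) <| by
    rw [Fintype.bijective_iff_injective_and_card]
    refine ⟨Function.Injective.sumElim ?_ (Fin.castSucc_injective _ |>.comp (Fin.succ_injective _))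
      ?_, by simp [add_comm]⟩
    · intro a b
      fin_cases a <;> fin_cases b <;> simp [Fin.ext_iff]
    · intro a k
      have := k.isLt
      fin_cases a <;> simp [Fin.ext_iff]; omega

namespace Matrix

variable {R : Type*} [CommRing R] {l m : Type*} [Fintype l] [Fintype m] [DecidableEq l]
  [DecidableEq m]

theorem mul_fromBlocks_adjugate_toBlocks (A : Matrix (l ⊕ m) (l ⊕ m) R) :
    A * fromBlocks (adjugate A).toBlocks₁₁ 0 (adjugate A).toBlocks₂₁ 1
      = fromBlocks (A.det • 1) A.toBlocks₁₂ 0 A.toBlocks₂₂ := by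
  ext i (b | c)
  · have h := congrFun₂ (mul_adjugate A) i (.inl b)
    rcases i with a | c <;>
      simpa [mul_apply, Fintype.sum_sum_type, one_apply, toBlocks₁₁, toBlocks₂₁] using h
  · rcases i with a | c' <;>
      simp [mul_apply, Fintype.sum_sum_type, one_apply, toBlocks₁₂, toBlocks₂₂]

theorem det_mul_det_adjugate_toBlocks₁₁ (A : Matrix (l ⊕ m) (l ⊕ m) R) :
    A.det * (adjugate A).toBlocks₁₁.det = A.det ^ Fintype.card l * A.toBlocks₂₂.det := by
  simpa [det_fromBlocks_zero₁₂, det_fromBlocks_zero₂₁, det_smul] using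
    congrArg det (mul_fromBlocks_adjugate_toBlocks A)

theorem det_adjugate_toBlocks₁₁ {k : ℕ} (hl : Fintype.card l = k + 1)
    (A : Matrix (l ⊕ m) (l ⊕ m) R) :
    (adjugate A).toBlocks₁₁.det = A.det ^ k * A.toBlocks₂₂.det := by
  let X := mvPolynomialX (l ⊕ m) (l ⊕ m) ℤ
  suffices (adjugate X).toBlocks₁₁.det = X.det ^ k * X.toBlocks₂₂.det by
    let φ := MvPolynomial.aeval (R := ℤ) fun p : (l ⊕ m) × (l ⊕ m) => A p.1 p.2
    have hX : φ.mapMatrix X = A := mvPolynomialX_mapMatrix_aeval ℤ A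
    rw [← hX, ← AlgHom.map_adjugate]
    have hφ := congrArg φ this
    rw [map_mul, map_pow, AlgHom.map_det, AlgHom.map_det, AlgHom.map_det] at hφ
    exact hφ
  apply mul_left_cancel₀ (det_mvPolynomialX_ne_zero (l ⊕ m) ℤ)
  rw [det_mul_det_adjugate_toBlocks₁₁, hl, pow_succ', mul_assoc]

theorem adjugate_corner_minor_eq {n : ℕ}
    (A : Matrix (Fin (n + 2)) (Fin (n + 2)) R) :
    adjugate A 0 0 * adjugate A (Fin.last (n + 1)) (Fin.last (n + 1))
        - adjugate A 0 (Fin.last (n + 1)) * adjugate A (Fin.last (n + 1)) 0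
      = A.det * (A.submatrix (fun p : Fin n => p.succ.castSucc) (fun q => q.succ.castSucc)).det := by
  have h := det_adjugate_toBlocks₁₁ (Fintype.card_fin 2)
    (A.submatrix (Fin.endsSumInteriorEquiv n) (Fin.endsSumInteriorEquiv n))
  rw [adjugate_submatrix_equiv_self, det_submatrix_equiv_self, pow_one, det_fin_two] at h
  exact h

end Matrix

/-- Desnanot–Jacobi identity: for an `(n+2) × (n+2)` matrix `A` over a
commutative ring, `det A · det A_{1n,1n} = det A_{1,1} · det A_{n,n} − det A_{1,n} · det A_{n,1}`,
where `A_{i,j}` is `A` with row `i` and column `j` removed and `A_{1n,1n}` is `A`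
with the first and last rows and columns removed. -/
theorem desnanot_jacobi
    (R : Type*) [CommRing R] (n : ℕ) (A : Matrix (Fin (n + 2)) (Fin (n + 2)) R) :
    A.det *
        (A.submatrix (fun p : Fin n => Fin.castSucc (Fin.succ p))
          (fun q : Fin n => Fin.castSucc (Fin.succ q))).det
      = (A.submatrix (Fin.succAbove 0) (Fin.succAbove 0)).det *
          (A.submatrix (Fin.succAbove (Fin.last (n + 1)))
            (Fin.succAbove (Fin.last (n + 1)))).det
        - (A.submatrix (Fin.succAbove 0) (Fin.succAbove (Fin.last (n + 1)))).det *
            (A.submatrix (Fin.succAbove (Fin.last (n + 1))) (Fin.succAbove 0)).det := by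
  have h_even : (-1 : R) ^ (n + 1 + (n + 1)) = 1 := Even.neg_one_pow ⟨n + 1, rfl⟩
  have h_sign : (-1 : R) ^ (n + 1) * (-1) ^ (n + 1) = 1 := by rw [← pow_add, h_even]
  have h := A.adjugate_corner_minor_eq
  simp only [adjugate_fin_succ_eq_det_submatrix, Fin.val_zero, Fin.val_last, add_zero, zero_add,
    pow_zero, one_mul, h_even, mul_mul_mul_comm, h_sign] at h
  rw [← h]
  ring
end

section
/- W5 identity: for smooth functions f_1,...,f_{a+2}, letting W(S) denote the Wronskian of the functions indexed by S, one has W(W({1,...,a+1}), W({1,...,a} ∪ {a+2})) = W({1,...,a})·W({1,...,a+2}), where the outer W is the 2×2 Wronskian u v' − u' v. -/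
open Matrix Fin

variable {R : Type*} [CommRing R]

/-- Expand determinant after updating a column, by linearity. -/
lemma aux_expand {m : ℕ} (A : Matrix (Fin m) (Fin m) R) (j : Fin m) (v : Fin m → R) :
    det (A.updateCol j v) = ∑ p, v p * det (A.updateCol j (Pi.single p 1)) := by
  have hv : v = ∑ p, v p • (Pi.single p (1:R) : Fin m → R) := by
    funext x
    simp [Pi.single_apply]
  calc det (A.updateCol j v) = cramer A v j := (cramer_apply A v j).symm
    _ = ∑ p, v p * det (A.updateCol j (Pi.single p 1)) := by
        rw [hv, map_sum]
        simp only [_root_.map_smul, Finset.sum_apply, Pi.smul_apply, smul_eq_mul, cramer_apply]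
        exact (Finset.sum_congr rfl fun x _ => by simp [Pi.single_apply]).symm

lemma aux_single {m : ℕ} (A : Matrix (Fin m) (Fin m) R) (j p : Fin m) (c : R) :
    det (A.updateCol j (Pi.single p c)) = c * det (A.updateCol j (Pi.single p 1)) := by
  rw [aux_expand]
  rw [Finset.sum_eq_single p (by intro b _ hb; simp [Pi.single_apply, hb]) (by simp)]
  simp

lemma aux_cof {m : ℕ} (A : Matrix (Fin (m+1)) (Fin (m+1)) R) (p q : Fin (m+1)) :
    det (A.updateCol q (Pi.single p 1))
      = (-1)^((p:ℕ)+(q:ℕ)) * det (A.submatrix p.succAbove q.succAbove) := by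
  have h1 : det (A.updateCol q (Pi.single p 1)) = det (Aᵀ.updateRow q (Pi.single p 1)) := by
    rw [← det_transpose (A.updateCol q (Pi.single p 1)), ← updateRow_transpose]
  rw [h1, ← adjugate_apply, adjugate_fin_succ_eq_det_submatrix]
  rw [← transpose_submatrix, det_transpose, add_comm]

lemma aux_comm {m : ℕ} (A : Matrix (Fin m) (Fin m) R) {i j : Fin m} (hij : i ≠ j)
    (u v : Fin m → R) :
    (A.updateCol i u).updateCol j v = (A.updateCol j v).updateCol i u := by
  ext x q
  rcases eq_or_ne q j with rfl | hq
  · simp [updateCol_apply, hij.symm]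
  · rcases eq_or_ne q i with rfl | hq2
    · simp [updateCol_apply, hq]
    · simp [updateCol_apply, hq, hq2]

lemma detE {m : ℕ} {i₀ j₀ : Fin m} (hij : i₀ ≠ j₀) (p r : Fin m) :
    det (((1 : Matrix (Fin m) (Fin m) R).updateCol j₀
        (Pi.single p 1)).updateCol i₀ (Pi.single r 1))
      = if p = j₀ ∧ r = i₀ then 1
        else if p = i₀ ∧ r = j₀ then -1 else 0 := by
  set E := ((1 : Matrix (Fin m) (Fin m) R).updateCol j₀
        (Pi.single p 1)).updateCol i₀ (Pi.single r 1) with hE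
  have hEapp : ∀ x q, E x q = if q = i₀ then (if x = r then (1:R) else 0)
      else if q = j₀ then (if x = p then 1 else 0) else (1 : Matrix (Fin m) (Fin m) R) x q := by
    intro x q
    simp [hE, updateCol_apply, Pi.single_apply]
  rcases eq_or_ne r p with rfl | hrp
  · have h0 : det E = 0 := det_zero_of_column_eq hij (fun x => by
      rw [hEapp, hEapp]; simp [hij.symm])
    rw [h0]
    split_ifs with h1 h2
    · exact absurd (h1.1 ▸ h1.2 : (j₀ : Fin m) = i₀).symm hij
    · exact absurd (h2.1 ▸ h2.2 : (i₀ : Fin m) = j₀) hij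
    · rfl
  · by_cases hri : r = i₀
    · by_cases hpj : p = j₀
      · have h1 : E = 1 := by
          ext x q
          rw [hEapp, one_apply]
          by_cases hq1 : q = i₀
          · simp [hq1, hri]
          · by_cases hq2 : q = j₀
            · simp [hq1, hq2, hpj, hij.symm]
            · simp [hq1, hq2, one_apply]
        rw [h1, det_one]
        simp [hpj, hri]
      · have hpi : p ≠ i₀ := fun h => hrp (hri.trans h.symm)
        have h0 : det E = 0 := det_zero_of_column_eq (Ne.symm hpj) (fun x => by
          rw [hEapp, hEapp]
          simp [hpj, hpi, hij.symm, one_apply])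
        rw [h0]
        simp [hpj, fun h : p = i₀ => hpi h]
    · by_cases hrj : r = j₀
      · by_cases hpi : p = i₀
        · have hs : E = (1 : Matrix (Fin m) (Fin m) R).submatrix id (Equiv.swap i₀ j₀) := by
            ext x q
            rw [hEapp, Matrix.submatrix_apply, id_eq]
            by_cases hq1 : q = i₀
            · simp [hq1, hrj, one_apply, Equiv.swap_apply_left]
            · by_cases hq2 : q = j₀
              · simp [hq1, hq2, hpi, hij.symm, one_apply, Equiv.swap_apply_right]
              · rw [Equiv.swap_apply_of_ne_of_ne hq1 hq2]
                simp [hq1, hq2]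
          rw [hs, det_permute', Equiv.Perm.sign_swap hij, det_one]
          simp [hpi, hrj, hij, Ne.symm hij]
        · have hpj : p ≠ j₀ := fun h => hrp (hrj.trans h.symm)
          have h0 : det E = 0 := det_zero_of_column_eq (Ne.symm hpj) (fun x => by
            rw [hEapp, hEapp]
            simp [hpj, hpi, hij.symm, one_apply])
          rw [h0]
          simp [hpj, hpi]
      · have h0 : det E = 0 := det_zero_of_column_eq (fun h => hri h.symm) (fun x => by
          rw [hEapp, hEapp]
          simp [hri, hrj, one_apply])
        rw [h0]
        simp [hri, hrj]

lemma aux_sub {m : ℕ} (A : Matrix (Fin (m+1)) (Fin (m+1)) R) (c : Fin m) (w : Fin (m+1) → R) :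
    (A.updateCol c.castSucc w).submatrix (Fin.castSucc : Fin m → Fin (m+1)) Fin.castSucc
      = (A.submatrix Fin.castSucc Fin.castSucc).updateCol c (fun k => w k.castSucc) := by
  ext x q
  by_cases hq : q = c
  · subst hq; simp [updateCol_apply]
  · simp [updateCol_apply, hq, Fin.castSucc_inj]

lemma detC {n : ℕ} (M : Matrix (Fin (n+2)) (Fin (n+2)) R) :
    det (((1 : Matrix (Fin (n+2)) (Fin (n+2)) R).updateCol ((Fin.last n).castSucc)
          (fun p => adjugate M p ((Fin.last n).castSucc))).updateCol (Fin.last (n+1))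
          (fun p => adjugate M p (Fin.last (n+1))))
      = adjugate M (Fin.last (n+1)) (Fin.last (n+1)) * adjugate M ((Fin.last n).castSucc) ((Fin.last n).castSucc)
        - adjugate M ((Fin.last n).castSucc) (Fin.last (n+1)) * adjugate M (Fin.last (n+1)) ((Fin.last n).castSucc) := by
  set i₀ : Fin (n+2) := (Fin.last n).castSucc with hi
  set j₀ : Fin (n+2) := Fin.last (n+1) with hj
  have hij : i₀ ≠ j₀ := by
    simp only [hi, hj, Fin.ne_iff_vne, Fin.coe_castSucc, Fin.val_last]
    omega
  set u : Fin (n+2) → R := fun p => adjugate M p i₀ with hu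
  set v : Fin (n+2) → R := fun p => adjugate M p j₀ with hv
  have step : ∀ p, det (((1 : Matrix (Fin (n+2)) (Fin (n+2)) R).updateCol i₀ u).updateCol j₀
        (Pi.single p 1))
      = (if p = j₀ then u i₀ else 0) - (if p = i₀ then u j₀ else 0) := by
    intro p
    rw [aux_comm _ hij, aux_expand]
    simp only [detE hij]
    by_cases hp : p = j₀
    · have hp2 : p ≠ i₀ := fun h => hij (h.symm.trans hp)
      simp [hp, hp2, hij, Ne.symm hij, mul_ite, Finset.sum_ite_eq']
    · by_cases hp2 : p = i₀
      · simp [hp, hp2, hij, Ne.symm hij, mul_ite, Finset.sum_ite_eq']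
      · simp [hp, hp2]
  rw [aux_expand]
  simp only [step]
  simp [mul_sub, mul_ite, Finset.sum_sub_distrib, Finset.sum_ite_eq']
  simp only [hu, hv]

lemma predj {n : ℕ} (M : Matrix (Fin (n+2)) (Fin (n+2)) R) :
    det M * (det (M.submatrix (Fin.last (n+1)).succAbove (Fin.last (n+1)).succAbove) *
        det (M.submatrix ((Fin.last n).castSucc).succAbove ((Fin.last n).castSucc).succAbove)
      - det (M.submatrix (Fin.last (n+1)).succAbove ((Fin.last n).castSucc).succAbove) *
        det (M.submatrix ((Fin.last n).castSucc).succAbove (Fin.last (n+1)).succAbove))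
    = det M * (det (M.submatrix ((Fin.castSucc ∘ Fin.castSucc) : Fin n → Fin (n+2))
        (Fin.castSucc ∘ Fin.castSucc)) * det M) := by
  have hij : ((Fin.last n).castSucc : Fin (n+2)) ≠ Fin.last (n+1) := by
    simp only [Fin.ne_iff_vne, Fin.coe_castSucc, Fin.val_last]
    omega
  -- adjugate entries as minors
  have e1 : ((-1 : R)) ^ ((Fin.last (n+1) : Fin (n+2)) + (Fin.last (n+1) : Fin (n+2)) : ℕ) = 1 :=
    Even.neg_one_pow ⟨(Fin.last (n+1) : Fin (n+2)), rfl⟩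
  have e2 : ((-1 : R)) ^ (((Fin.last n).castSucc : Fin (n+2)) + ((Fin.last n).castSucc : Fin (n+2)) : ℕ) = 1 :=
    Even.neg_one_pow ⟨((Fin.last n).castSucc : Fin (n+2)), rfl⟩
  have e3 : ((-1 : R)) ^ ((Fin.last (n+1) : Fin (n+2)) + ((Fin.last n).castSucc : Fin (n+2)) : ℕ) = -1 :=
    Odd.neg_one_pow (by simp only [Fin.val_last, Fin.coe_castSucc]; exact ⟨n, by ring⟩)
  have e4 : ((-1 : R)) ^ (((Fin.last n).castSucc : Fin (n+2)) + (Fin.last (n+1) : Fin (n+2)) : ℕ) = -1 :=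
    Odd.neg_one_pow (by simp only [Fin.val_last, Fin.coe_castSucc]; exact ⟨n, by ring⟩)
  have hjj : adjugate M (Fin.last (n+1)) (Fin.last (n+1))
      = det (M.submatrix (Fin.last (n+1)).succAbove (Fin.last (n+1)).succAbove) := by
    rw [adjugate_fin_succ_eq_det_submatrix, e1, one_mul]
  have hii : adjugate M ((Fin.last n).castSucc) ((Fin.last n).castSucc)
      = det (M.submatrix ((Fin.last n).castSucc).succAbove ((Fin.last n).castSucc).succAbove) := by
    rw [adjugate_fin_succ_eq_det_submatrix, e2, one_mul]
  have hij' : adjugate M ((Fin.last n).castSucc) (Fin.last (n+1))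
      = -det (M.submatrix (Fin.last (n+1)).succAbove ((Fin.last n).castSucc).succAbove) := by
    rw [adjugate_fin_succ_eq_det_submatrix, e3, neg_one_mul]
  have hji : adjugate M (Fin.last (n+1)) ((Fin.last n).castSucc)
      = -det (M.submatrix ((Fin.last n).castSucc).succAbove (Fin.last (n+1)).succAbove) := by
    rw [adjugate_fin_succ_eq_det_submatrix, e4, neg_one_mul]
  -- the companion matrix
  set C := ((1 : Matrix (Fin (n+2)) (Fin (n+2)) R).updateCol ((Fin.last n).castSucc)
        (fun p => adjugate M p ((Fin.last n).castSucc))).updateCol (Fin.last (n+1))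
        (fun p => adjugate M p (Fin.last (n+1))) with hCdef
  have hdetC : det C = det (M.submatrix (Fin.last (n+1)).succAbove (Fin.last (n+1)).succAbove) *
        det (M.submatrix ((Fin.last n).castSucc).succAbove ((Fin.last n).castSucc).succAbove)
      - det (M.submatrix (Fin.last (n+1)).succAbove ((Fin.last n).castSucc).succAbove) *
        det (M.submatrix ((Fin.last n).castSucc).succAbove (Fin.last (n+1)).succAbove) := by
    rw [hCdef, detC M, hjj, hii, hij', hji]
    ring
  -- M * C
  have hMC : M * C = (M.updateCol ((Fin.last n).castSucc)
        (Pi.single ((Fin.last n).castSucc) (det M))).updateCol (Fin.last (n+1))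
        (Pi.single (Fin.last (n+1)) (det M)) := by
    ext x q
    rw [mul_apply]
    by_cases hq : q = Fin.last (n+1)
    · subst hq
      have h1 : ∀ k, C k (Fin.last (n+1)) = adjugate M k (Fin.last (n+1)) := by
        intro k; simp [hCdef, updateCol_apply]
      simp only [h1]
      have h2 := congrFun (congrFun (mul_adjugate M) x) (Fin.last (n+1))
      rw [mul_apply] at h2
      rw [h2]
      simp [updateCol_apply, Pi.single_apply, one_apply, Matrix.smul_apply]
    · by_cases hq2 : q = (Fin.last n).castSucc
      · subst hq2
        have h1 : ∀ k, C k ((Fin.last n).castSucc) = adjugate M k ((Fin.last n).castSucc) := by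
          intro k; simp [hCdef, updateCol_apply, hij, hq]
        simp only [h1]
        have h2 := congrFun (congrFun (mul_adjugate M) x) ((Fin.last n).castSucc)
        rw [mul_apply] at h2
        rw [h2]
        simp [updateCol_apply, hq, Pi.single_apply, one_apply, Matrix.smul_apply, hij]
      · have h1 : ∀ k, C k q = (1 : Matrix (Fin (n+2)) (Fin (n+2)) R) k q := by
          intro k; simp [hCdef, updateCol_apply, hq, hq2]
        simp only [h1]
        simp [updateCol_apply, hq, hq2, one_apply, mul_ite, Finset.sum_ite_eq']
  -- determinant of the updated matrix
  have hsingle : (fun k : Fin (n+1) => (Pi.single ((Fin.last n).castSucc) (det M) : Fin (n+2) → R) k.castSucc)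
      = (Pi.single (Fin.last n) (det M) : Fin (n+1) → R) := by
    funext k
    simp [Pi.single_apply, Fin.castSucc_inj]
  have hD : det ((M.updateCol ((Fin.last n).castSucc)
        (Pi.single ((Fin.last n).castSucc) (det M))).updateCol (Fin.last (n+1))
        (Pi.single (Fin.last (n+1)) (det M)))
      = det M * (det (M.submatrix ((Fin.castSucc ∘ Fin.castSucc) : Fin n → Fin (n+2))
          (Fin.castSucc ∘ Fin.castSucc)) * det M) := by
    rw [aux_single, aux_cof, e1, one_mul, Fin.succAbove_last, aux_sub, hsingle,
      aux_single, aux_cof]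
    have e5 : ((-1 : R)) ^ ((Fin.last n : Fin (n+1)) + (Fin.last n : Fin (n+1)) : ℕ) = 1 :=
      Even.neg_one_pow ⟨(Fin.last n : Fin (n+1)), rfl⟩
    rw [e5, one_mul, Fin.succAbove_last, submatrix_submatrix]
    ring
  calc det M * (det (M.submatrix (Fin.last (n+1)).succAbove (Fin.last (n+1)).succAbove) *
        det (M.submatrix ((Fin.last n).castSucc).succAbove ((Fin.last n).castSucc).succAbove)
      - det (M.submatrix (Fin.last (n+1)).succAbove ((Fin.last n).castSucc).succAbove) *
        det (M.submatrix ((Fin.last n).castSucc).succAbove (Fin.last (n+1)).succAbove))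
      = det M * det C := by rw [hdetC]
    _ = det (M * C) := (det_mul M C).symm
    _ = _ := by rw [hMC, hD]

lemma dj {n : ℕ} (M : Matrix (Fin (n+2)) (Fin (n+2)) R) :
    det (M.submatrix (Fin.last (n+1)).succAbove (Fin.last (n+1)).succAbove) *
      det (M.submatrix ((Fin.last n).castSucc).succAbove ((Fin.last n).castSucc).succAbove)
    - det (M.submatrix (Fin.last (n+1)).succAbove ((Fin.last n).castSucc).succAbove) *
      det (M.submatrix ((Fin.last n).castSucc).succAbove (Fin.last (n+1)).succAbove)
    = det (M.submatrix ((Fin.castSucc ∘ Fin.castSucc) : Fin n → Fin (n+2))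
        (Fin.castSucc ∘ Fin.castSucc)) * det M := by
  let X : Matrix (Fin (n+2)) (Fin (n+2)) (MvPolynomial (Fin (n+2) × Fin (n+2)) ℤ) :=
    fun p q => MvPolynomial.X (p, q)
  have hXdet : det X ≠ 0 := by
    intro h
    have h2 : X.map (MvPolynomial.eval
        (fun pq : Fin (n+2) × Fin (n+2) => if pq.1 = pq.2 then (1:ℤ) else 0))
        = (1 : Matrix (Fin (n+2)) (Fin (n+2)) ℤ) := by
      ext p q
      rw [Matrix.map_apply]
      simp [X, Matrix.one_apply]
    have h3 := congrArg (MvPolynomial.eval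
        (fun pq : Fin (n+2) × Fin (n+2) => if pq.1 = pq.2 then (1:ℤ) else 0)) h
    rw [map_zero, RingHom.map_det, RingHom.mapMatrix_apply, h2, det_one] at h3
    exact one_ne_zero h3
  have hdj := mul_left_cancel₀ hXdet (predj X)
  let φ : MvPolynomial (Fin (n+2) × Fin (n+2)) ℤ →+* R :=
    MvPolynomial.eval₂Hom (Int.castRingHom R) (fun pq => M pq.1 pq.2)
  have hmap : ∀ {k : ℕ} (fr fc : Fin k → Fin (n+2)),
      φ (det (X.submatrix fr fc)) = det (M.submatrix fr fc) := by
    intro k fr fc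
    rw [RingHom.map_det]
    congr 1
    ext p q
    simp only [RingHom.mapMatrix_apply, Matrix.map_apply, Matrix.submatrix_apply]
    simp [X, φ]
  have hmapX : φ (det X) = det M := by
    rw [RingHom.map_det]
    congr 1
    ext p q
    simp only [RingHom.mapMatrix_apply, Matrix.map_apply]
    simp [X, φ]
  have := congrArg φ hdj
  rw [map_sub, _root_.map_mul, _root_.map_mul, _root_.map_mul, hmap, hmap, hmap, hmap, hmap, hmapX] at this
  exact this

lemma wderiv {k : ℕ} (g : Fin (k+1) → ℝ → ℝ) (hg : ∀ p, ContDiff ℝ (⊤ : ℕ∞) (g p)) (x : ℝ) :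
    HasDerivAt (fun y => det (fun p q : Fin (k+1) => iteratedDeriv (q : ℕ) (g p) y))
      (det (fun p q : Fin (k+1) =>
        iteratedDeriv (if (q : ℕ) = k then k+1 else (q : ℕ)) (g p) x)) x := by
  have hD : ∀ (p : Fin (k+1)) (q : ℕ),
      HasDerivAt (iteratedDeriv q (g p)) (iteratedDeriv (q+1) (g p) x) x := by
    intro p q
    have h1 : Differentiable ℝ (iteratedDeriv q (g p)) :=
      (hg p).differentiable_iteratedDeriv q (by exact_mod_cast lt_top_iff_ne_top.2 (by simp))
    have h2 := (h1 x).hasDerivAt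
    rw [iteratedDeriv_succ]
    exact h2
  -- matrices with one bumped column
  set N : Fin (k+1) → Matrix (Fin (k+1)) (Fin (k+1)) ℝ := fun j => fun p q =>
    iteratedDeriv (if q = j then (q : ℕ)+1 else (q : ℕ)) (g p) x with hN
  have hprod : ∀ (σ : Equiv.Perm (Fin (k+1))) (j : Fin (k+1)),
      (∏ q ∈ Finset.univ.erase j, iteratedDeriv (q : ℕ) (g (σ q)) x) •
        iteratedDeriv ((j : ℕ)+1) (g (σ j)) x = ∏ q, N j (σ q) q := by
    intro σ j
    rw [smul_eq_mul, mul_comm, ← Finset.mul_prod_erase Finset.univ _ (Finset.mem_univ j)]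
    congr 1
    · simp [hN]
    · exact Finset.prod_congr rfl fun q hq => by
        simp [hN, Finset.mem_erase.1 hq |>.1]
  have H : HasDerivAt (fun y => det (fun p q : Fin (k+1) => iteratedDeriv (q : ℕ) (g p) y))
      (∑ j, det (N j)) x := by
    have hdet : (fun y => det (fun p q : Fin (k+1) => iteratedDeriv (q : ℕ) (g p) y))
        = fun y => ∑ σ : Equiv.Perm (Fin (k+1)),
            ((Equiv.Perm.sign σ : ℤ) : ℝ) * ∏ q : Fin (k+1), iteratedDeriv (q : ℕ) (g (σ q)) y := by
      funext y
      exact Matrix.det_apply' _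
    rw [hdet]
    have h2 : ∀ σ : Equiv.Perm (Fin (k+1)),
        HasDerivAt (fun y => ((Equiv.Perm.sign σ : ℤ) : ℝ) *
            ∏ q : Fin (k+1), iteratedDeriv (q : ℕ) (g (σ q)) y)
          (((Equiv.Perm.sign σ : ℤ) : ℝ) * ∑ j, ∏ q, N j (σ q) q) x := by
      intro σ
      have h3 := HasDerivAt.fun_finsetProd (u := Finset.univ)
        (f := fun q : Fin (k+1) => fun y => iteratedDeriv (q : ℕ) (g (σ q)) y)
        (f' := fun q : Fin (k+1) => iteratedDeriv ((q : ℕ)+1) (g (σ q)) x)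
        (fun j _ => hD (σ j) j)
      simp only [hprod σ] at h3
      exact h3.const_mul _
    have h4 := HasDerivAt.fun_sum (u := Finset.univ) (fun σ _ => h2 σ)
    convert h4 using 1
    · rfl
    · rfl
    simp_rw [Finset.mul_sum]
    rw [Finset.sum_comm]
    exact Finset.sum_congr rfl fun j _ => by rw [Matrix.det_apply']
  have hvanish : ∀ j : Fin (k+1), j ≠ Fin.last k → det (N j) = 0 := by
    intro j hj
    have hjk : (j : ℕ) < k := lt_of_le_of_ne (Nat.lt_succ_iff.1 j.isLt)
      (fun h => hj (Fin.ext (by simp [h])))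
    refine det_zero_of_column_eq (i := j) (j := ⟨(j : ℕ)+1, by omega⟩)
      (fun h => by simpa using congrArg Fin.val h) (fun p => ?_)
    have h1 : (⟨(j : ℕ)+1, by omega⟩ : Fin (k+1)) ≠ j := fun h => by
      simpa using congrArg Fin.val h
    simp [hN, h1]
  have hsum : (∑ j, det (N j)) = det (N (Fin.last k)) :=
    Finset.sum_eq_single (Fin.last k) (fun b _ hb => hvanish b hb) (fun h => absurd (Finset.mem_univ _) h)
  have hlast : N (Fin.last k) = fun p q : Fin (k+1) =>
      iteratedDeriv (if (q : ℕ) = k then k+1 else (q : ℕ)) (g p) x := by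
    funext p q
    by_cases hq : q = Fin.last k
    · subst hq; simp [hN]
    · have : (q : ℕ) ≠ k := fun h => hq (Fin.ext (by simp [h]))
      simp [hN, hq, this]
  rw [hsum, hlast] at H
  exact H


/-- W5 identity: for smooth functions `f_1, ..., f_{a+2}` (indexed
here `f 0, ..., f (a+1)`), with `W(S)` the Wronskian of the functions indexed by `S`,
`W(W({1,...,a+1}), W({1,...,a} ∪ {a+2})) = W({1,...,a}) · W({1,...,a+2})`,
the outer `W` being the `2 × 2` Wronskian `u v' − u' v`. -/
theorem w5_identity
    (a : ℕ) (f : ℕ → ℝ → ℝ) (hf : ∀ i, ContDiff ℝ (⊤ : ℕ∞) (f i))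
    (WA WB : ℝ → ℝ)
    (hWA : WA = fun x => Matrix.det
        (fun p q : Fin (a + 1) => iteratedDeriv (q : ℕ) (f p) x))
    (hWB : WB = fun x => Matrix.det
        (fun p q : Fin (a + 1) =>
          iteratedDeriv (q : ℕ) (f (if (p : ℕ) = a then a + 1 else (p : ℕ))) x)) :
    ∀ x : ℝ,
      WA x * deriv WB x - deriv WA x * WB x
        = Matrix.det (fun p q : Fin a => iteratedDeriv (q : ℕ) (f p) x) *
            Matrix.det (fun p q : Fin (a + 2) => iteratedDeriv (q : ℕ) (f p) x) := by
  intro x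
  set B : Matrix (Fin (a+2)) (Fin (a+2)) ℝ := fun p q => iteratedDeriv (q : ℕ) (f p) x with hB
  have hsa : ∀ q : Fin (a+1), ((((Fin.last a).castSucc).succAbove q : Fin (a+2)) : ℕ)
      = if (q : ℕ) = a then a+1 else (q : ℕ) := by
    intro q
    by_cases h : (q : ℕ) = a
    · rw [Fin.succAbove_of_le_castSucc]
      · simp [h]
      · simp [Fin.le_def, h]
    · rw [Fin.succAbove_of_castSucc_lt]
      · simp [h]
      · have hq := q.isLt
        simp only [Fin.lt_def, Fin.coe_castSucc, Fin.val_last]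
        omega
  have HA := wderiv (k := a) (fun p => f (p : ℕ)) (fun p => hf _) x
  have HB := wderiv (k := a) (fun p => f (if (p : ℕ) = a then a + 1 else (p : ℕ)))
    (fun p => hf _) x
  have hWAx : WA x = det (B.submatrix (Fin.last (a+1)).succAbove (Fin.last (a+1)).succAbove) := by
    rw [hWA]
    beta_reduce
    congr 1
    funext p q
    simp only [Matrix.submatrix_apply]
    simp [hB, Fin.succAbove_last]
  have hdWAx : deriv WA x
      = det (B.submatrix (Fin.last (a+1)).succAbove ((Fin.last a).castSucc).succAbove) := by
    rw [hWA]
    rw [HA.deriv]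
    congr 1
    funext p q
    simp only [Matrix.submatrix_apply]
    simp [hB, Fin.succAbove_last, hsa q]
  have hWBx : WB x = det (B.submatrix ((Fin.last a).castSucc).succAbove (Fin.last (a+1)).succAbove) := by
    rw [hWB]
    beta_reduce
    congr 1
    funext p q
    simp only [Matrix.submatrix_apply]
    simp [hB, Fin.succAbove_last, hsa p]
  have hdWBx : deriv WB x
      = det (B.submatrix ((Fin.last a).castSucc).succAbove ((Fin.last a).castSucc).succAbove) := by
    rw [hWB]
    rw [HB.deriv]
    congr 1
    funext p q
    simp only [Matrix.submatrix_apply]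
    simp [hB, hsa p, hsa q]
  have hinner : Matrix.det (fun p q : Fin a => iteratedDeriv (q : ℕ) (f p) x)
      = det (B.submatrix ((Fin.castSucc ∘ Fin.castSucc) : Fin a → Fin (a+2))
          (Fin.castSucc ∘ Fin.castSucc)) := by
    congr 1
  have hbig : Matrix.det (fun p q : Fin (a+2) => iteratedDeriv (q : ℕ) (f p) x) = det B := rfl
  rw [hWAx, hdWAx, hWBx, hdWBx, hinner, hbig]
  exact dj B
end
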